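/- arXiv:1611.04096 — 3 statements merged into one kernel-verified Lean document; each statement's English description precedes it below -/
import Mathlib

section
/- With the tensor-product resolution K_• of Z over ZG for G = Z_{m_1} × ⋯ × Z_{m_k} as above, a 3-cochain f ∈ Hom_{ZG}(K_3, k*) is a coboundary if and only if f_{l,l,l} = 1 for all 1 ≤ l ≤ k, f_{r,s,t} = 1 for all 1 ≤ r < s < t ≤ k, and for all 1 ≤ i < j ≤ k there exists g_{i,j} ∈ k* with f_{i,i,j} = g_{i,j}^{m_i} and f_{i,j,j} = g_{i,j}^{−m_j}. -/
open Finset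

/-- The multi-index `Ψ_{r,s,t}` (as a function `Fin N → ℕ`), with repetitions allowed. -/
def idx3 {N : ℕ} (r s t : Fin N) : Fin N → ℕ :=
  fun i => (if i = r then 1 else 0) + (if i = s then 1 else 0) + (if i = t then 1 else 0)

/-- The value of `g ∘ d` on the free generator `Ψ_b` of the tensor-product resolution, for a
`ℤG`-linear cochain `g` with values in the trivial module `kˣ`. -/
noncomputable def delta3 {k : Type*} [Field k] {N : ℕ} (m : Fin N → ℕ)
    (g : (Fin N → ℕ) → kˣ) (b : Fin N → ℕ) : kˣ :=
  ∏ i, if b i ≠ 0 ∧ Even (b i) then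
      g (Function.update b i (b i - 1)) ^
        ((-1 : ℤ) ^ (∑ l ∈ Finset.univ.filter (fun l => l < i), b l) * (m i : ℤ))
    else 1

def pair2 {N : ℕ} (i j : Fin N) : Fin N → ℕ :=
  fun l => (if l = i then 1 else 0) + (if l = j then 1 else 0)

lemma pair2_inj {N : ℕ} {i j i' j' : Fin N} (hij : i < j) (hij' : i' < j')
    (h : pair2 i j = pair2 i' j') : i = i' ∧ j = j' := by
  have h1 := congrFun h i'
  have h2 := congrFun h j'
  simp only [pair2, if_pos rfl] at h1 h2
  rw [if_neg (hij'.ne' : j' ≠ i')] at h2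
  norm_num at h1 h2
  have e1 : i' = i ∨ i' = j := by
    by_cases a : i' = i
    · exact Or.inl a
    · right; by_contra a'; simp [a, a', hij'.ne] at h1
  have e2 : j' = i ∨ j' = j := by
    by_cases a : j' = i
    · exact Or.inl a
    · right; by_contra a'; simp [a, a'] at h2
  rcases e1 with e1 | e1 <;> rcases e2 with e2 | e2
  · exact absurd (e1 ▸ e2 ▸ hij') (lt_irrefl _)
  · exact ⟨e1.symm, e2.symm⟩
  · exact absurd (e2 ▸ e1 ▸ hij' |>.trans hij) (lt_irrefl _)
  · exact absurd (e1 ▸ e2 ▸ hij') (lt_irrefl _)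

lemma sum_idx3 {N : ℕ} (r s t : Fin N) : ∑ i, idx3 r s t i = 3 := by
  simp [idx3, Finset.sum_add_distrib, Finset.sum_ite_eq']

lemma classify3 {N : ℕ} (b : Fin N → ℕ) (h : ∑ i, b i = 3) :
    (∃ l, b = idx3 l l l) ∨ (∃ i j, i < j ∧ b = idx3 i i j) ∨
    (∃ i j, i < j ∧ b = idx3 i j j) ∨ (∃ r s t, r < s ∧ s < t ∧ b = idx3 r s t) := by
  classical
  set S := Finset.univ.filter (fun i => b i ≠ 0) with hS
  have hzero : ∀ i, i ∉ S → b i = 0 := by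
    intro i hi; by_contra hb; exact hi (by simp [hS, hb])
  have hmem : ∀ i ∈ S, 1 ≤ b i := by
    intro i hi; simp [hS] at hi; omega
  have hsum : ∑ i ∈ S, b i = 3 := by
    rw [← h]; exact Finset.sum_subset (Finset.subset_univ S)
      (fun i _ hi => hzero i hi)
  have hcard : S.card ≤ 3 := by
    calc S.card = ∑ _i ∈ S, 1 := by simp
    _ ≤ ∑ i ∈ S, b i := Finset.sum_le_sum hmem
    _ = 3 := hsum
  have hpos : 0 < S.card := by
    by_contra hc
    have : S = ∅ := by
      rcases Finset.eq_empty_or_nonempty S with h' | h'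
      · exact h'
      · exact absurd (Finset.card_pos.mpr h') hc
    rw [this] at hsum; simp at hsum
  interval_cases hc : S.card
  · obtain ⟨l, hl⟩ := Finset.card_eq_one.mp hc
    left; refine ⟨l, funext fun i => ?_⟩
    by_cases hi : i = l
    · subst hi
      have : b i = 3 := by rw [← hsum, hl]; simp
      simp [idx3, this]
    · have : b i = 0 := hzero i (by simp [hl, hi])
      simp [idx3, hi, this]
  · obtain ⟨x, y, hxy, hl⟩ := Finset.card_eq_two.mp hc
    have hsum2 : b x + b y = 3 := by rw [← hsum, hl, Finset.sum_pair hxy]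
    have hx1 : 1 ≤ b x := hmem x (by simp [hl])
    have hy1 : 1 ≤ b y := hmem y (by simp [hl])
    have hrest : ∀ i, i ≠ x → i ≠ y → b i = 0 := fun i h1 h2 =>
      hzero i (by simp [hl, h1, h2])
    rcases lt_or_gt_of_ne hxy with hlt | hlt
    · rcases (by omega : b x = 2 ∧ b y = 1 ∨ b x = 1 ∧ b y = 2) with ⟨e1, e2⟩ | ⟨e1, e2⟩
      · right; left; refine ⟨x, y, hlt, funext fun i => ?_⟩
        by_cases h1 : i = x
        · subst h1; simp [idx3, e1, hxy]
        · by_cases h2 : i = y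
          · subst h2; simp [idx3, e2, Ne.symm hxy, h1]
          · simp [idx3, h1, h2, hrest i h1 h2]
      · right; right; left; refine ⟨x, y, hlt, funext fun i => ?_⟩
        by_cases h1 : i = x
        · subst h1; simp [idx3, e1, hxy]
        · by_cases h2 : i = y
          · subst h2; simp [idx3, e2, Ne.symm hxy, h1]
          · simp [idx3, h1, h2, hrest i h1 h2]
    · rcases (by omega : b x = 2 ∧ b y = 1 ∨ b x = 1 ∧ b y = 2) with ⟨e1, e2⟩ | ⟨e1, e2⟩
      · right; right; left; refine ⟨y, x, hlt, funext fun i => ?_⟩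
        by_cases h1 : i = x
        · subst h1; simp [idx3, e1, hxy]
        · by_cases h2 : i = y
          · subst h2; simp [idx3, e2, Ne.symm hxy, h1]
          · simp [idx3, h1, h2, hrest i h1 h2]
      · right; left; refine ⟨y, x, hlt, funext fun i => ?_⟩
        by_cases h1 : i = x
        · subst h1; simp [idx3, e1, hxy]
        · by_cases h2 : i = y
          · subst h2; simp [idx3, e2, Ne.symm hxy, h1]
          · simp [idx3, h1, h2, hrest i h1 h2]
  · obtain ⟨x, y, z, hxy, hxz, hyz, hl⟩ := Finset.card_eq_three.mp hc
    have hsum3 : b x + b y + b z = 3 := by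
      rw [← hsum, hl]
      rw [Finset.sum_insert (by simp [hxy, hxz]), Finset.sum_pair hyz]
      ring
    have hx1 : 1 ≤ b x := hmem x (by simp [hl])
    have hy1 : 1 ≤ b y := hmem y (by simp [hl])
    have hz1 : 1 ≤ b z := hmem z (by simp [hl])
    have ex : b x = 1 := by omega
    have ey : b y = 1 := by omega
    have ez : b z = 1 := by omega
    have hrest : ∀ i, i ≠ x → i ≠ y → i ≠ z → b i = 0 := fun i h1 h2 h3 =>
      hzero i (by simp [hl, h1, h2, h3])
    have key : ∀ r s t : Fin N, r ≠ s → r ≠ t → s ≠ t → b r = 1 → b s = 1 → b t = 1 →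
        (∀ i, i ≠ r → i ≠ s → i ≠ t → b i = 0) → b = idx3 r s t := by
      intro r s t h1 h2 h3 e1 e2 e3 hr
      funext i
      by_cases a1 : i = r
      · subst a1; simp [idx3, h1, h2, e1]
      · by_cases a2 : i = s
        · subst a2; simp [idx3, Ne.symm h1, h3, e2, a1]
        · by_cases a3 : i = t
          · subst a3; simp [idx3, Ne.symm h2, Ne.symm h3, e3, a1, a2]
          · simp [idx3, a1, a2, a3, hr i a1 a2 a3]
    right; right; right
    rcases lt_trichotomy x y with c1 | c1 | c1
    · rcases lt_trichotomy y z with c2 | c2 | c2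
      · exact ⟨x, y, z, c1, c2, key x y z hxy hxz hyz ex ey ez hrest⟩
      · exact absurd c2 hyz
      · rcases lt_trichotomy x z with c3 | c3 | c3
        · exact ⟨x, z, y, c3, c2, key x z y hxz hxy (Ne.symm hyz) ex ez ey
            (fun i a b c => hrest i a c b)⟩
        · exact absurd c3 hxz
        · exact ⟨z, x, y, c3, c1, key z x y (Ne.symm hxz) (Ne.symm hyz) hxy ez ex ey
            (fun i a b c => hrest i b c a)⟩
    · exact absurd c1 hxy
    · rcases lt_trichotomy x z with c2 | c2 | c2
      · exact ⟨y, x, z, c1, c2, key y x z (Ne.symm hxy) hyz hxz ey ex ez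
          (fun i a b c => hrest i b a c)⟩
      · exact absurd c2 hxz
      · rcases lt_trichotomy y z with c3 | c3 | c3
        · exact ⟨y, z, x, c3, c2, key y z x hyz (Ne.symm hxy) (Ne.symm hxz)
            ey ez ex (fun i a b c => hrest i c a b)⟩
        · exact absurd c3 hyz
        · exact ⟨z, y, x, c3, c1, key z y x (Ne.symm hyz) (Ne.symm hxz) (Ne.symm hxy) ez ey ex
            (fun i a b c => hrest i c b a)⟩

section Delta
variable {k : Type*} [Field k] {N : ℕ} (m : Fin N → ℕ) (g : (Fin N → ℕ) → kˣ)

lemma delta3_odd (b : Fin N → ℕ) (hb : ∀ i, ¬(b i ≠ 0 ∧ Even (b i))) :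
    delta3 m g b = 1 :=
  Finset.prod_eq_one (fun i _ => if_neg (hb i))

lemma delta3_lll (l : Fin N) : delta3 m g (idx3 l l l) = 1 := by
  apply delta3_odd
  intro i
  by_cases hi : i = l
  · subst hi; simp [idx3]; decide
  · simp [idx3, hi]

lemma delta3_rst (r s t : Fin N) (h1 : r < s) (h2 : s < t) :
    delta3 m g (idx3 r s t) = 1 := by
  apply delta3_odd
  intro i
  have h3 : r < t := h1.trans h2
  by_cases a1 : i = r
  · subst a1; simp [idx3, h1.ne, h3.ne]
  · by_cases a2 : i = s
    · subst a2; simp [idx3, h1.ne', h2.ne, a1]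
    · by_cases a3 : i = t
      · subst a3; simp [idx3, h3.ne', h2.ne', a1, a2]
      · simp [idx3, a1, a2, a3]

lemma delta3_iij (i j : Fin N) (hij : i < j) :
    delta3 m g (idx3 i i j) = g (pair2 i j) ^ (m i : ℤ) := by
  have hbi : idx3 i i j i = 2 := by simp [idx3, hij.ne]
  have hbo : ∀ l, l ≠ i → idx3 i i j l = if l = j then 1 else 0 := by
    intro l hl; simp [idx3, hl]
  unfold delta3
  rw [Finset.prod_eq_single_of_mem i (Finset.mem_univ i)]
  · rw [if_pos (by rw [hbi]; exact ⟨two_ne_zero, even_two⟩)]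
    have harg : Function.update (idx3 i i j) i (idx3 i i j i - 1) = pair2 i j := by
      funext l
      rcases eq_or_ne l i with hl | hl
      · subst hl; simp [Function.update_self, hbi, pair2, hij.ne]
      · rw [Function.update_of_ne hl, hbo l hl]
        simp [pair2, hl]
    have hsum : ∑ l ∈ Finset.univ.filter (fun l => l < i), idx3 i i j l = 0 := by
      apply Finset.sum_eq_zero
      intro l hl
      simp only [Finset.mem_filter] at hl
      rw [hbo l hl.2.ne]
      exact if_neg (fun e => absurd (e ▸ hl.2) (by simp [not_lt]; exact hij.le))
    rw [harg, hsum]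
    norm_num
  · intro l _ hl
    rw [if_neg]
    rw [hbo l hl]
    rcases eq_or_ne l j with e | e <;> simp [e]

lemma delta3_ijj (i j : Fin N) (hij : i < j) :
    delta3 m g (idx3 i j j) = g (pair2 i j) ^ (-(m j : ℤ)) := by
  have hbj : idx3 i j j j = 2 := by simp [idx3, hij.ne']
  have hbo : ∀ l, l ≠ j → idx3 i j j l = if l = i then 1 else 0 := by
    intro l hl; simp [idx3, hl]
  unfold delta3
  rw [Finset.prod_eq_single_of_mem j (Finset.mem_univ j)]
  · rw [if_pos (by rw [hbj]; exact ⟨two_ne_zero, even_two⟩)]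
    have harg : Function.update (idx3 i j j) j (idx3 i j j j - 1) = pair2 i j := by
      funext l
      rcases eq_or_ne l j with hl | hl
      · subst hl; simp [Function.update_self, hbj, pair2, hij.ne']
      · rw [Function.update_of_ne hl, hbo l hl]
        simp [pair2, hl]
    have hsum : ∑ l ∈ Finset.univ.filter (fun l => l < j), idx3 i j j l = 1 := by
      rw [Finset.sum_congr rfl (fun l hl => hbo l (Finset.mem_filter.mp hl).2.ne)]
      rw [Finset.sum_ite_eq' (Finset.univ.filter (fun l => l < j)) i (fun _ => 1)]
      simp [hij]
    rw [harg, hsum]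
    norm_num
  · intro l _ hl
    rw [if_neg]
    rw [hbo l hl]
    rcases eq_or_ne l i with e | e <;> simp [e]

end Delta

/-- A 3-cochain `f ∈ Hom_{ℤG}(K₃, kˣ)` is a coboundary (i.e. `f = g ∘ d` on `K₃` for some
2-cochain `g`) iff `f_{l,l,l} = 1`, `f_{r,s,t} = 1` for `r < s < t`, and for all `i < j`
there is `g_{i,j} ∈ kˣ` with `f_{i,i,j} = g_{i,j}^{m_i}` and `f_{i,j,j} = g_{i,j}^{-m_j}`. -/
theorem stmt_6 {k : Type*} [Field k] {N : ℕ} (m : Fin N → ℕ) (hm : ∀ i, 0 < m i)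
    (f : (Fin N → ℕ) → kˣ) :
    (∃ g : (Fin N → ℕ) → kˣ, ∀ b : Fin N → ℕ, (∑ i, b i) = 3 → f b = delta3 m g b) ↔
    ((∀ l : Fin N, f (idx3 l l l) = 1) ∧
     (∀ r s t : Fin N, r < s → s < t → f (idx3 r s t) = 1) ∧
     (∀ i j : Fin N, i < j → ∃ gij : kˣ,
        f (idx3 i i j) = gij ^ (m i : ℤ) ∧ f (idx3 i j j) = gij ^ (-(m j : ℤ)))) := by
  constructor
  · rintro ⟨g, hg⟩
    refine ⟨fun l => ?_, fun r s t h1 h2 => ?_, fun i j hij => ?_⟩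
    · rw [hg _ (sum_idx3 l l l), delta3_lll]
    · rw [hg _ (sum_idx3 r s t), delta3_rst m g r s t h1 h2]
    · exact ⟨g (pair2 i j),
        by rw [hg _ (sum_idx3 i i j), delta3_iij m g i j hij],
        by rw [hg _ (sum_idx3 i j j), delta3_ijj m g i j hij]⟩
  · rintro ⟨h1, h2, h3⟩
    classical
    choose G hG using h3
    refine ⟨fun c =>
      if h : ∃ p : Fin N × Fin N, p.1 < p.2 ∧ c = pair2 p.1 p.2 then
        G h.choose.1 h.choose.2 h.choose_spec.1 else 1, fun b hb => ?_⟩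
    have hgp : ∀ (i j : Fin N) (hij : i < j),
        (if h : ∃ p : Fin N × Fin N, p.1 < p.2 ∧ pair2 i j = pair2 p.1 p.2 then
          G h.choose.1 h.choose.2 h.choose_spec.1 else 1) = G i j hij := by
      intro i j hij
      have hex : ∃ p : Fin N × Fin N, p.1 < p.2 ∧ pair2 i j = pair2 p.1 p.2 :=
        ⟨(i, j), hij, rfl⟩
      rw [dif_pos hex]
      obtain ⟨hp1, hp2⟩ := hex.choose_spec
      obtain ⟨e1, e2⟩ := pair2_inj hij hp1 hp2
      congr 1 <;> omega
    rcases classify3 b hb with ⟨l, rfl⟩ | ⟨i, j, hij, rfl⟩ | ⟨i, j, hij, rfl⟩ |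
        ⟨r, s, t, hrs, hst, rfl⟩
    · rw [delta3_lll]; exact h1 l
    · rw [delta3_iij _ _ i j hij, hgp i j hij]; exact (hG i j hij).1
    · rw [delta3_ijj _ _ i j hij, hgp i j hij]; exact (hG i j hij).2
    · rw [delta3_rst _ _ r s t hrs hst]; exact h2 r s t hrs hst
end

section
/- Let 𝔾 = Z_{𝕞_1} × ⋯ × Z_{𝕞_n} with fixed generators 𝕘_1,…,𝕘_n, and let Φ_a be the 3-cocycle on 𝔾 with parameters a_l, a_{st}, a_{rst} given by the standard formula. Suppose some a_{rst} ≠ 0 for r < s < t (i.e., Φ_a is non-abelian). Then for any positive integers l_1,…,l_n divisible respectively by 𝕞_1,…,𝕞_n and the canonical epimorphism π : Z_{l_1} × ⋯ × Z_{l_n} → 𝔾 sending the i-th generator to 𝕘_i, the pull-back π*(Φ_a) is not a 3-coboundary. -/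
/-!
For every 2-cochain `J` on an abelian group, the alternating product of `δJ(x, y, z)` over the six
orderings of `(x, y, z)` is `1`: once `y + x = x + y`, every value of `J` occurs equally often in
the numerator and the denominator. On the generators `x = 𝕘_t`, `y = 𝕘_s`, `z = 𝕘_r` (with
`r < s < t`), the carry factors of `Φ_a` vanish and the `a_{rst}`-factor only survives for the
identity ordering, so the alternating product of `π*(Φ_a)` is `ζ^{-a_{rst}} ≠ 1`.
-/

open Finset

/-- A fixed primitive `m`-th root of unity in `ℂ`. -/
noncomputable def zeta (m : ℕ) : ℂ :=
  Complex.exp (2 * (Real.pi : ℂ) * Complex.I / (m : ℂ))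

/-- The standard 3-cocycle `Φ_a` on `𝔾 = Z_{𝕞_1} × ⋯ × Z_{𝕞_n}`. -/
noncomputable def Phi3 {n : ℕ} (mm : Fin n → ℕ)
    (a1 : Fin n → ℕ) (a2 : Fin n → Fin n → ℕ) (a3 : Fin n → Fin n → Fin n → ℕ)
    (x y z : ∀ l, ZMod (mm l)) : ℂ :=
  (∏ l, zeta (mm l) ^ (a1 l * (x l).val * (((y l).val + (z l).val) / mm l))) *
  (∏ s, ∏ t, if s < t then
      zeta (mm t) ^ (a2 s t * (x t).val * (((y s).val + (z s).val) / mm s)) else 1) *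
  (∏ r, ∏ s, ∏ t, if r < s ∧ s < t then
      zeta (Nat.gcd (Nat.gcd (mm r) (mm s)) (mm t)) ^
        (-((a3 r s t * (z r).val * (y s).val * (x t).val : ℕ) : ℤ)) else 1)

theorem zeta_isPrimitiveRoot {m : ℕ} (hm : m ≠ 0) : IsPrimitiveRoot (zeta m) m :=
  Complex.isPrimitiveRoot_exp m hm

section Alternation

variable {H M : Type*}

def coboundary [Add H] [Group M] (J : H → H → M) (x y z : H) : M :=
  J y z * J x (y + z) * (J (x + y) z)⁻¹ * (J x y)⁻¹

def alternation [DivisionCommMonoid M] (φ : H → H → H → M) (x y z : H) : M :=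
  φ x y z * φ y z x * φ z x y / (φ y x z * φ x z y * φ z y x)

theorem alternation_map {N : Type*} [CommGroup M] [DivisionCommMonoid N]
    (f : M →* N) (φ : H → H → H → M) (x y z : H) :
    alternation (fun x y z => f (φ x y z)) x y z = f (alternation φ x y z) := by
  simp only [alternation, map_mul, map_div]

theorem alternation_coboundary [AddCommMagma H] [CommGroup M] (J : H → H → M) (x y z : H) :
    alternation (coboundary J) x y z = 1 := by
  simp only [alternation, coboundary]
  rw [add_comm y x, add_comm z y, add_comm z x]
  apply Additive.ofMul.injective
  simp only [ofMul_mul, ofMul_div, ofMul_inv, ofMul_one]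
  abel

end Alternation

section SingleGenerators

variable {n : ℕ} {mm : Fin n → ℕ}

theorem val_single_one {k : Fin n} (hk : mm k ≠ 1) (i : Fin n) :
    (Pi.single (M := fun i => ZMod (mm i)) k 1 i).val = if i = k then 1 else 0 := by
  by_cases h : i = k
  · subst h
    simp [ZMod.val_one_eq_one_mod, Nat.one_mod_eq_one.mpr hk]
  · simp [h]

theorem natCast_val_single_one {l : Fin n → ℕ} {k : Fin n} (hk : mm k ∣ l k) :
    (fun i => ((Pi.single (M := fun i => ZMod (l i)) k 1 i).val : ZMod (mm i))) =
      Pi.single k 1 := by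
  funext i
  by_cases h : i = k
  · subst h
    rw [Pi.single_eq_same, Pi.single_eq_same, ZMod.val_one_eq_one_mod]
    exact ((ZMod.natCast_eq_natCast_iff' _ 1 _).mpr (Nat.mod_mod_of_dvd 1 hk)).trans Nat.cast_one
  · simp [h]

theorem carry_single_one {i j : Fin n} (hij : i ≠ j) (hi : mm i ≠ 1) (hj : mm j ≠ 1)
    (l : Fin n) :
    ((Pi.single (M := fun i => ZMod (mm i)) j 1 l).val +
      (Pi.single (M := fun i => ZMod (mm i)) i 1 l).val) / mm l = 0 := by
  rw [val_single_one hj, val_single_one hi, Nat.div_eq_zero_iff]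
  split_ifs <;> subst_vars <;> omega

theorem Phi3_single (a1 : Fin n → ℕ) (a2 : Fin n → Fin n → ℕ)
    (a3 : Fin n → Fin n → Fin n → ℕ)
    {i j k : Fin n} (hij : i ≠ j) (hi : mm i ≠ 1) (hj : mm j ≠ 1) (hk : mm k ≠ 1) :
    Phi3 mm a1 a2 a3 (Pi.single k 1) (Pi.single j 1) (Pi.single i 1) =
      if i < j ∧ j < k then
        zeta (Nat.gcd (Nat.gcd (mm i) (mm j)) (mm k)) ^ (-(a3 i j k : ℤ))
      else 1 := by
  simp only [Phi3, carry_single_one hij hi hj, mul_zero, pow_zero, ite_self, prod_const_one,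
    one_mul]
  simp only [val_single_one hi, val_single_one hj, val_single_one hk]
  rw [prod_eq_single i (fun r _ hr => by simp [hr]) (by simp),
    prod_eq_single j (fun s _ hs => by simp [hs]) (by simp),
    prod_eq_single k (fun t _ ht => by simp [ht]) (by simp)]
  simp

theorem alternation_Phi3_single (a1 : Fin n → ℕ) (a2 : Fin n → Fin n → ℕ)
    (a3 : Fin n → Fin n → Fin n → ℕ) {r s t : Fin n} (hrs : r < s) (hst : s < t)
    (hr : mm r ≠ 1) (hs : mm s ≠ 1) (ht : mm t ≠ 1) :
    alternation (Phi3 mm a1 a2 a3) (Pi.single t 1) (Pi.single s 1) (Pi.single r 1) =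
      zeta (Nat.gcd (Nat.gcd (mm r) (mm s)) (mm t)) ^ (-(a3 r s t : ℤ)) := by
  have hrt := hrs.trans hst
  simp only [alternation,
    Phi3_single a1 a2 a3 hrs.ne hr hs ht, Phi3_single a1 a2 a3 hrs.ne' hs hr ht,
    Phi3_single a1 a2 a3 hst.ne hs ht hr, Phi3_single a1 a2 a3 hst.ne' ht hs hr,
    Phi3_single a1 a2 a3 hrt.ne hr ht hs, Phi3_single a1 a2 a3 hrt.ne' ht hr hs]
  simp [hrs, hst, hrs.not_gt, hst.not_gt, hrt.not_gt]

end SingleGenerators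

theorem stmt_8_general {n : ℕ} (mm : Fin n → ℕ)
    (a1 : Fin n → ℕ)
    (a2 : Fin n → Fin n → ℕ)
    (a3 : Fin n → Fin n → Fin n → ℕ)
    (ha3 : ∀ r s t : Fin n, r < s → s < t →
      a3 r s t < Nat.gcd (Nat.gcd (mm r) (mm s)) (mm t))
    (hna : ∃ r s t : Fin n, r < s ∧ s < t ∧ a3 r s t ≠ 0)
    (l : Fin n → ℕ) (hdvd : ∀ i, mm i ∣ l i)
    (π : (∀ i, ZMod (l i)) → ∀ i, ZMod (mm i))
    (hπ : ∀ x i, π x i = ((x i).val : ZMod (mm i))) :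
    ¬ ∃ J : (∀ i, ZMod (l i)) → (∀ i, ZMod (l i)) → ℂˣ,
        ∀ x y z : ∀ i, ZMod (l i),
          Phi3 mm a1 a2 a3 (π x) (π y) (π z) =
            ↑(J y z * J x (y + z) * (J (x + y) z)⁻¹ * (J x y)⁻¹) := by
  obtain ⟨r, s, t, hrs, hst, ha⟩ := hna
  rintro ⟨J, hJ⟩
  have hg : 1 < Nat.gcd (Nat.gcd (mm r) (mm s)) (mm t) := by
    have := ha3 r s t hrs hst
    omega
  have hne_one {i : Fin n} (hi : Nat.gcd (Nat.gcd (mm r) (mm s)) (mm t) ∣ mm i) : mm i ≠ 1 :=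
    fun h => hg.ne' (Nat.eq_one_of_dvd_one (h ▸ hi))
  have hπ_single (k : Fin n) : π (Pi.single k 1) = Pi.single k 1 :=
    (funext (hπ _)).trans (natCast_val_single_one (hdvd k))
  have h_alt := congrArg (Units.coeHom ℂ)
    (alternation_coboundary J (Pi.single t 1) (Pi.single s 1) (Pi.single r 1))
  rw [← alternation_map, map_one] at h_alt
  simp only [Units.coeHom_apply, coboundary, ← hJ] at h_alt
  change alternation (Phi3 mm a1 a2 a3) (π _) (π _) (π _) = 1 at h_alt
  rw [hπ_single, hπ_single, hπ_single, alternation_Phi3_single a1 a2 a3 hrs hst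
      (hne_one ((Nat.gcd_dvd_left _ _).trans (Nat.gcd_dvd_left _ _)))
      (hne_one ((Nat.gcd_dvd_left _ _).trans (Nat.gcd_dvd_right _ _)))
      (hne_one (Nat.gcd_dvd_right _ _)),
    zpow_neg, zpow_natCast, inv_eq_one] at h_alt
  exact (zeta_isPrimitiveRoot (by omega)).pow_ne_one_of_pos_of_lt ha (ha3 r s t hrs hst) h_alt

/-- If `Φ_a` is non-abelian (some `a_{rst} ≠ 0`), then for any product of cyclic groups
`Z_{l_1} × ⋯ × Z_{l_n}` with `𝕞_i ∣ l_i` and the canonical generator-to-generator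
epimorphism `π`, the pull-back `π*(Φ_a)` is not a 3-coboundary. -/
theorem stmt_8 {n : ℕ} (mm : Fin n → ℕ) (hmm : ∀ i, 0 < mm i)
    (a1 : Fin n → ℕ) (ha1 : ∀ i, a1 i < mm i)
    (a2 : Fin n → Fin n → ℕ) (ha2 : ∀ s t : Fin n, s < t → a2 s t < Nat.gcd (mm s) (mm t))
    (a3 : Fin n → Fin n → Fin n → ℕ)
    (ha3 : ∀ r s t : Fin n, r < s → s < t →
      a3 r s t < Nat.gcd (Nat.gcd (mm r) (mm s)) (mm t))
    (hna : ∃ r s t : Fin n, r < s ∧ s < t ∧ a3 r s t ≠ 0)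
    (l : Fin n → ℕ) (hl : ∀ i, 0 < l i) (hdvd : ∀ i, mm i ∣ l i)
    (π : (∀ i, ZMod (l i)) → ∀ i, ZMod (mm i))
    (hπ : ∀ x i, π x i = ((x i).val : ZMod (mm i))) :
    ¬ ∃ J : (∀ i, ZMod (l i)) → (∀ i, ZMod (l i)) → ℂˣ,
        ∀ x y z : ∀ i, ZMod (l i),
          Phi3 mm a1 a2 a3 (π x) (π y) (π z) =
            ↑(J y z * J x (y + z) * (J (x + y) z)⁻¹ * (J x y)⁻¹) :=
  stmt_8_general mm a1 a2 a3 ha3 hna l hdvd π hπ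
end

section
/- Let Φ be a non-abelian 3-cocycle on a finite abelian group 𝔾 (in the standard form Φ_a with some a_{rst} ≠ 0). Then for every finite abelian group G and every group epimorphism π : G → 𝔾, the pull-back π*(Φ) is not a 3-coboundary on G. -/
open Finset

/-- The "basis vector" of `∀ l, ZMod (mm l)` at coordinate `i`. -/
def E {n : ℕ} (mm : Fin n → ℕ) (i : Fin n) : ∀ l, ZMod (mm l) :=
  fun l => if l = i then 1 else 0

lemma val_E {n : ℕ} (mm : Fin n → ℕ) (c l : Fin n) (hc : 1 < mm c) :
    (E mm c l).val = if l = c then 1 else 0 := by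
  by_cases h : l = c
  · subst h
    simp only [E, if_pos rfl]
    haveI : Fact (1 < mm l) := ⟨hc⟩
    exact ZMod.val_one _
  · simp only [E, if_neg h]
    exact ZMod.val_zero

lemma phi3_single {n : ℕ} (mm : Fin n → ℕ) (hmm : ∀ i, 0 < mm i)
    (a1 : Fin n → ℕ) (a2 : Fin n → Fin n → ℕ) (a3 : Fin n → Fin n → Fin n → ℕ)
    (i j k : Fin n) (hjk : j ≠ k)
    (h2i : 1 < mm i) (h2j : 1 < mm j) (h2k : 1 < mm k) :
    Phi3 mm a1 a2 a3 (E mm i) (E mm j) (E mm k) =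
      if k < j ∧ j < i then
        zeta (Nat.gcd (Nat.gcd (mm k) (mm j)) (mm i)) ^ (-(a3 k j i : ℤ)) else 1 := by
  have hdiv : ∀ l, ((E mm j l).val + (E mm k l).val) / mm l = 0 := by
    intro l
    apply Nat.div_eq_of_lt
    rw [val_E mm j l h2j, val_E mm k l h2k]
    by_cases h1 : l = j
    · rw [if_pos h1, if_neg (fun hk => hjk (h1.symm.trans hk))]
      have : mm l = mm j := by rw [h1]
      omega
    · rw [if_neg h1]
      by_cases h2 : l = k
      · rw [if_pos h2]
        have : mm l = mm k := by rw [h2]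
        omega
      · rw [if_neg h2]
        have := hmm l
        omega
  unfold Phi3
  have F1 : (∏ l, zeta (mm l) ^
      (a1 l * ((E mm i) l).val * (((E mm j l).val + (E mm k l).val) / mm l))) = 1 := by
    apply Finset.prod_eq_one
    intro l _
    rw [hdiv l, Nat.mul_zero, pow_zero]
  have F2 : (∏ s, ∏ t, if s < t then
      zeta (mm t) ^ (a2 s t * ((E mm i) t).val * (((E mm j s).val + (E mm k s).val) / mm s))
      else 1) = 1 := by
    apply Finset.prod_eq_one
    intro s _
    apply Finset.prod_eq_one
    intro t _
    split_ifs with h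
    · rw [hdiv s, Nat.mul_zero, pow_zero]
    · rfl
  have F3 : (∏ r, ∏ s, ∏ t, if r < s ∧ s < t then
      zeta (Nat.gcd (Nat.gcd (mm r) (mm s)) (mm t)) ^
        (-((a3 r s t * ((E mm k) r).val * ((E mm j) s).val * ((E mm i) t).val : ℕ) : ℤ))
      else 1) =
      if k < j ∧ j < i then
        zeta (Nat.gcd (Nat.gcd (mm k) (mm j)) (mm i)) ^ (-(a3 k j i : ℤ)) else 1 := by
    rw [Finset.prod_eq_single_of_mem k (Finset.mem_univ _) (by
      intro b _ hb
      apply Finset.prod_eq_one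
      intro s _
      apply Finset.prod_eq_one
      intro t _
      split_ifs with h
      · rw [val_E mm k b h2k, if_neg hb]
        simp
      · rfl)]
    rw [Finset.prod_eq_single_of_mem j (Finset.mem_univ _) (by
      intro b _ hb
      apply Finset.prod_eq_one
      intro t _
      split_ifs with h
      · rw [val_E mm j b h2j, if_neg hb]
        simp
      · rfl)]
    rw [Finset.prod_eq_single_of_mem i (Finset.mem_univ _) (by
      intro b _ hb
      split_ifs with h
      · rw [val_E mm i b h2i, if_neg hb]
        simp
      · rfl)]
    rw [val_E mm k k h2k, val_E mm j j h2j, val_E mm i i h2i]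
    simp
  rw [F1, F2, F3, one_mul, one_mul]

/-- If `Φ_a` is a non-abelian 3-cocycle on `𝔾`, then for every finite abelian group `G` and
every epimorphism `π : G → 𝔾`, the pull-back `π*(Φ_a)` is not a 3-coboundary on `G`. -/
theorem stmt_9 {n : ℕ} (mm : Fin n → ℕ) (hmm : ∀ i, 0 < mm i)
    (a1 : Fin n → ℕ) (ha1 : ∀ i, a1 i < mm i)
    (a2 : Fin n → Fin n → ℕ) (ha2 : ∀ s t : Fin n, s < t → a2 s t < Nat.gcd (mm s) (mm t))
    (a3 : Fin n → Fin n → Fin n → ℕ)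
    (ha3 : ∀ r s t : Fin n, r < s → s < t →
      a3 r s t < Nat.gcd (Nat.gcd (mm r) (mm s)) (mm t))
    (hna : ∃ r s t : Fin n, r < s ∧ s < t ∧ a3 r s t ≠ 0)
    (G : Type) [AddCommGroup G] [Fintype G]
    (π : G →+ (∀ i, ZMod (mm i))) (hπ : Function.Surjective π) :
    ¬ ∃ J : G → G → ℂˣ,
        ∀ x y z : G,
          Phi3 mm a1 a2 a3 (π x) (π y) (π z) =
            ↑(J y z * J x (y + z) * (J (x + y) z)⁻¹ * (J x y)⁻¹) := by
  rintro ⟨J, hJ⟩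
  obtain ⟨r, s, t, hrs, hst, ha⟩ := hna
  set g := Nat.gcd (Nat.gcd (mm r) (mm s)) (mm t) with hg
  have hag : a3 r s t < g := ha3 r s t hrs hst
  have hg1 : 1 < g := lt_of_le_of_lt (Nat.one_le_iff_ne_zero.mpr ha) hag
  have h2r : 1 < mm r :=
    lt_of_lt_of_le hg1 (Nat.le_of_dvd (hmm r)
      ((Nat.gcd_dvd_left _ _).trans (Nat.gcd_dvd_left _ _)))
  have h2s : 1 < mm s :=
    lt_of_lt_of_le hg1 (Nat.le_of_dvd (hmm s)
      ((Nat.gcd_dvd_left _ _).trans (Nat.gcd_dvd_right _ _)))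
  have h2t : 1 < mm t :=
    lt_of_lt_of_le hg1 (Nat.le_of_dvd (hmm t) (Nat.gcd_dvd_right _ _))
  obtain ⟨xr, hxr⟩ := hπ (E mm r)
  obtain ⟨xs, hxs⟩ := hπ (E mm s)
  obtain ⟨xt, hxt⟩ := hπ (E mm t)
  have hrt : r < t := hrs.trans hst
  have e1 := hJ xt xs xr
  have e2 := hJ xs xr xt
  have e3 := hJ xr xt xs
  have e4 := hJ xs xt xr
  have e5 := hJ xt xr xs
  have e6 := hJ xr xs xt
  rw [hxt, hxs, hxr, phi3_single mm hmm a1 a2 a3 t s r hrs.ne' h2t h2s h2r,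
    if_pos ⟨hrs, hst⟩] at e1
  rw [hxs, hxr, hxt, phi3_single mm hmm a1 a2 a3 s r t hrt.ne h2s h2r h2t,
    if_neg (fun h => absurd h.1 (asymm hrt))] at e2
  rw [hxr, hxt, hxs, phi3_single mm hmm a1 a2 a3 r t s hst.ne' h2r h2t h2s,
    if_neg (fun h => absurd h.2 (asymm hrt))] at e3
  rw [hxs, hxt, hxr, phi3_single mm hmm a1 a2 a3 s t r hrt.ne' h2s h2t h2r,
    if_neg (fun h => absurd h.2 (asymm hst))] at e4
  rw [hxt, hxr, hxs, phi3_single mm hmm a1 a2 a3 t r s hrs.ne h2t h2r h2s,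
    if_neg (fun h => absurd h.1 (asymm hrs))] at e5
  rw [hxr, hxs, hxt, phi3_single mm hmm a1 a2 a3 r s t hst.ne h2r h2s h2t,
    if_neg (fun h => absurd h.1 (asymm hst))] at e6
  simp only [Units.val_mul, Units.val_inv_eq_inv_val] at e1 e2 e3 e4 e5 e6
  simp only [add_comm xt xr, add_comm xs xt, add_comm xr xs] at e4 e5 e6
  have key : zeta g ^ (-(a3 r s t : ℤ)) = 1 := by
    have n1 : ((J (xt + xs) xr : ℂˣ) : ℂ) ≠ 0 := Units.ne_zero _
    have n2 : ((J xt xs : ℂˣ) : ℂ) ≠ 0 := Units.ne_zero _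
    have n3 : ((J (xs + xr) xt : ℂˣ) : ℂ) ≠ 0 := Units.ne_zero _
    have n4 : ((J xs xr : ℂˣ) : ℂ) ≠ 0 := Units.ne_zero _
    have n5 : ((J (xr + xt) xs : ℂˣ) : ℂ) ≠ 0 := Units.ne_zero _
    have n6 : ((J xr xt : ℂˣ) : ℂ) ≠ 0 := Units.ne_zero _
    have n7 : ((J xs xt : ℂˣ) : ℂ) ≠ 0 := Units.ne_zero _
    have n8 : ((J xt xr : ℂˣ) : ℂ) ≠ 0 := Units.ne_zero _
    have n9 : ((J xr xs : ℂˣ) : ℂ) ≠ 0 := Units.ne_zero _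
    have hL := congrArg₂ (· * ·) (congrArg₂ (· * ·) e1 e2) e3
    have hR := congrArg₂ (· * ·) (congrArg₂ (· * ·) e4 e5) e6
    simp only [mul_one] at hL
    simp only [mul_one] at hR
    rw [hL, hR]
    field_simp
  have hprim : IsPrimitiveRoot (zeta g) g := Complex.isPrimitiveRoot_exp g (by omega)
  have hdvd : (g : ℤ) ∣ -(a3 r s t : ℤ) := (hprim.zpow_eq_one_iff_dvd _).mp key
  rw [Int.dvd_neg, Int.natCast_dvd_natCast] at hdvd
  have := Nat.le_of_dvd (Nat.pos_of_ne_zero ha) hdvd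
  omega
end
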